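/- arXiv:2010.04499 — 4 statements merged into one kernel-verified Lean document; each statement's English description precedes it below -/
import Mathlib

section
/- Let N be a normal subgroup of a finite group G such that the quotient G/N is cyclic, and let χ be a G-invariant irreducible complex character of N. Then χ extends to an irreducible character of G, i.e., there exists χ̃ ∈ Irr(G) with χ̃ restricted to N equal to χ. -/
/-- `χ` is the character of an irreducible (finite-dimensional) complex
representation of `G`. -/
def IsIrrChar {G : Type} [Group G] (χ : G → ℂ) : Prop :=
  ∃ V : FDRep ℂ G, CategoryTheory.Simple V ∧ ∀ g : G, V.character g = χ g

/-!
Let `V` afford `χ` and let `x` generate `G ⧸ N`. Since `χ` is `G`-invariant, the twist of `V` by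
conjugation with `x` has the same character, hence is isomorphic to `V` through some `T` with
`T ρ(m) T⁻¹ = ρ(x m x⁻¹)`. If `n` is the order of `x N`, then `Tⁿ ρ(xⁿ)⁻¹` commutes with `ρ(N)`,
so it is a scalar by Schur's lemma, and rescaling `T` by an `n`-th root of its inverse achieves
`Tⁿ = ρ(xⁿ)`. Then `xᵏ m ↦ Tᵏ ρ(m)` is a well-defined representation of `G` extending `V`, and it
is irreducible because its restriction to `N` already is.
-/

open CategoryTheory

universe u

section Extension

variable {N M : Type*} [Group N] [Group M]

theorem MonoidHom.zpow_mul_mul_inv_eq_of_conj (φ : N →* M) {σ : MulAut N} {u : M}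
    (h : ∀ n, u * φ n * u⁻¹ = φ (σ n)) (k : ℤ) (n : N) :
    u ^ k * φ n * (u ^ k)⁻¹ = φ ((σ ^ k) n) := by
  induction k using Int.induction_on generalizing n with
  | zero => simp
  | succ k ih =>
    rw [zpow_add_one, zpow_add_one, MulAut.mul_apply, ← ih, ← h]
    group
  | pred k ih =>
    have h' : u⁻¹ * φ n * u = φ (σ⁻¹ n) := by
      have := h (σ⁻¹ n)
      rw [MulAut.apply_inv_self] at this
      rw [← this]
      group
    rw [zpow_sub_one, zpow_sub_one, MulAut.mul_apply, ← ih, ← h']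
    group

variable {G : Type*} [Group G] {N : Subgroup G} [N.Normal]

theorem MonoidHom.map_eq_zpow_of_pow_orderOf_eq (φ : N →* M) {x : G} {u : M}
    (hxn : x ^ orderOf (x : G ⧸ N) ∈ N) (hu : u ^ orderOf (x : G ⧸ N) = φ ⟨_, hxn⟩)
    (n : N) (k : ℤ) (hnk : (n : G) = x ^ k) : φ n = u ^ k := by
  obtain ⟨t, rfl⟩ : (orderOf (x : G ⧸ N) : ℤ) ∣ k := orderOf_dvd_iff_zpow_eq_one.mpr <| by
    rw [← QuotientGroup.mk_zpow, ← hnk, QuotientGroup.eq_one_iff]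
    exact n.2
  have hn : n = ⟨_, hxn⟩ ^ t := Subtype.ext (by simp [hnk, zpow_mul])
  rw [hn, map_zpow, ← hu, zpow_mul, zpow_natCast]

/-- `G` is the quotient of `N ⋊ ℤ` by the kernel of `(m, k) ↦ m xᵏ`, and `hpow` says that
`(m, k) ↦ φ(m) uᵏ` vanishes on that kernel. -/
theorem MonoidHom.exists_comp_subtype_eq (φ : N →* M) {x : G}
    (hx : ∀ q : G ⧸ N, q ∈ Subgroup.zpowers (x : G ⧸ N)) {u : M}
    (hconj : ∀ n, u * φ n * u⁻¹ = φ (MulAut.conjNormal x n))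
    (hpow : ∀ (n : N) (k : ℤ), (n : G) = x ^ k → φ n = u ^ k) :
    ∃ ψ : G →* M, ψ.comp N.subtype = φ := by
  let ψ₀ := SemidirectProduct.lift (φ := zpowersHom _ (MulAut.conjNormal x)) φ (zpowersHom M u)
    fun k => by ext n; exact (φ.zpow_mul_mul_inv_eq_of_conj hconj _ n).symm
  let π := SemidirectProduct.lift (φ := zpowersHom _ (MulAut.conjNormal x)) N.subtype
    (zpowersHom G x) fun k => by ext n; simp [← map_zpow]
  have hπ : Function.Surjective π := by
    intro g
    obtain ⟨k, hk⟩ := Subgroup.mem_zpowers_iff.mp (hx g)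
    have hmem : g * (x ^ k)⁻¹ ∈ N := by
      rw [← div_eq_mul_inv, ← QuotientGroup.eq_iff_div_mem, QuotientGroup.mk_zpow, hk]
    exact ⟨⟨⟨_, hmem⟩, Multiplicative.ofAdd k⟩, by simp [π]⟩
  have hker : π.ker ≤ ψ₀.ker := by
    rintro ⟨n, k⟩ hnk
    have hnk : (n : G) * x ^ k.toAdd = 1 := by simpa [π] using hnk
    have := hpow n⁻¹ k.toAdd (by simpa using inv_eq_of_mul_eq_one_right hnk)
    change φ n * u ^ k.toAdd = 1
    rw [← this, ← map_mul, mul_inv_cancel, map_one]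
  refine ⟨π.liftOfSurjective hπ ⟨ψ₀, hker⟩, MonoidHom.ext fun n => ?_⟩
  have hn : N.subtype n = π (SemidirectProduct.inl n) := by simp [π]
  rw [MonoidHom.comp_apply, hn, MonoidHom.liftOfRightInverse_comp_apply]
  simp [ψ₀]

end Extension

namespace FDRep

section CharacterCriteria

variable {k G : Type u} [Field k] [IsAlgClosed k] [CharZero k] [Group G] [Fintype G]

theorem simple_of_character_eq {V W : FDRep k G} [Simple V] (h : W.character = V.character) :
    Simple W := by
  rw [simple_iff_char_is_norm_one, h, ← simple_iff_char_is_norm_one]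
  infer_instance

theorem nonempty_iso_of_character_eq {V W : FDRep k G} [Simple V] (h : W.character = V.character) :
    Nonempty (W ≅ V) := by
  have := simple_of_character_eq h
  have := invertibleOfNonzero (NeZero.ne (Nat.card G : k))
  have hV := (simple_iff_char_is_norm_one V).mp inferInstance
  have hWV := char_orthonormal W V
  rw [h, hV, inv_mul_cancel_of_invertible] at hWV
  by_contra hne
  simp [hne] at hWV

end CharacterCriteria

theorem simple_of_simple_res {k : Type u} [Field k] {G H : Type*} [Group G] [Group H] (f : H →* G)
    (W : FDRep k G) [Simple ((Action.res _ f).obj W)] : Simple W := by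
  have : (Action.res (FGModuleCat k) f).PreservesMonomorphisms :=
    ⟨fun g _ => (Action.forget _ _).mono_of_mono_map ((Action.forget _ G).map_mono g)⟩
  exact Functor.simple_of_simple_obj (Action.res _ f) W

variable {k : Type u} [Field k] {G : Type*} [Group G]

theorem exists_eq_algebraMap_of_commute [IsAlgClosed k] (V : FDRep k G) [Simple V]
    (A : Module.End k V) (hA : ∀ g, Commute A (V.ρ g)) : ∃ c : k, A = algebraMap k _ c := by
  let f : V ⟶ V := ⟨ConcreteCategory.ofHom A, fun g => by
    ext v
    exact LinearMap.congr_fun (hA g) v⟩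
  obtain ⟨c, hc⟩ := endomorphism_simple_eq_smul_id k f
  refine ⟨c, LinearMap.ext fun v => ?_⟩
  exact (congrArg (fun φ : V ⟶ V => φ.hom.hom.hom v) hc).symm

theorem exists_unit_conj_of_iso (V : FDRep k G) (f : G →* G) (e : (Action.res _ f).obj V ≅ V) :
    ∃ T : (Module.End k V)ˣ, ∀ g, T * V.ρ.toHomUnits g * T⁻¹ = V.ρ.toHomUnits (f g) := by
  refine ⟨LinearMap.GeneralLinearGroup.ofLinearEquiv (isoToLinearEquiv e).symm, fun g => ?_⟩
  ext v
  change (isoToLinearEquiv e).symm (V.ρ g (isoToLinearEquiv e v)) = V.ρ (f g) v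
  rw [Iso.conj_ρ e g]
  simp only [LinearEquiv.conj_apply, LinearMap.comp_apply, LinearEquiv.coe_coe,
    LinearEquiv.symm_apply_apply]
  exact congrArg (V.ρ (f g)) ((isoToLinearEquiv e).symm_apply_apply v)

/-- Schur's lemma makes `Tⁿ ρ(y)⁻¹` a nonzero scalar `c`; the unit `u` is `T` rescaled by an
`n`-th root of `c⁻¹`. -/
theorem exists_unit_conj_and_pow_eq [IsAlgClosed k] (V : FDRep k G) [Simple V] {σ : MulAut G}
    {T : (Module.End k V)ˣ} (hT : ∀ g, T * V.ρ.toHomUnits g * T⁻¹ = V.ρ.toHomUnits (σ g))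
    {n : ℕ} (hn : n ≠ 0) {y : G} (hy : σ ^ n = MulAut.conj y) :
    ∃ u : (Module.End k V)ˣ,
      (∀ g, u * V.ρ.toHomUnits g * u⁻¹ = V.ρ.toHomUnits (σ g)) ∧ u ^ n = V.ρ.toHomUnits y := by
  set ρu := V.ρ.toHomUnits
  rcases subsingleton_or_nontrivial (Module.End k V) with _ | _
  · exact ⟨T, hT, Subsingleton.elim _ _⟩
  have hTn : ∀ g, T ^ n * ρu g * (T ^ n)⁻¹ = ρu (y * g * y⁻¹) := fun g => by
    simpa [hy] using ρu.zpow_mul_mul_inv_eq_of_conj hT n g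
  set ε := T ^ n * (ρu y)⁻¹
  obtain ⟨c, hc⟩ := exists_eq_algebraMap_of_commute V ε fun g => by
    have hε : ε * ρu g = ρu g * ε := by
      have hg := hTn (y⁻¹ * g * y)
      rw [show y * (y⁻¹ * g * y) * y⁻¹ = g by group] at hg
      conv_rhs => rw [← hg]
      simp only [ε, map_mul, map_inv]
      group
    exact congrArg Units.val hε
  have hc0 : c ≠ 0 := by
    rintro rfl
    have hε := ε.isUnit
    rw [hc, map_zero] at hε
    exact not_isUnit_zero hε
  obtain ⟨ζ, hζ⟩ := IsAlgClosed.exists_pow_nat_eq c⁻¹ (Nat.pos_of_ne_zero hn)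
  have hζ0 : ζ ≠ 0 := by
    rintro rfl
    exact inv_ne_zero hc0 (by rw [← hζ, zero_pow hn])
  let s : (Module.End k V)ˣ := Units.map (algebraMap k (Module.End k V)) (Units.mk0 ζ hζ0)
  have hs : ∀ A, Commute s A := fun A => Units.ext (Algebra.commutes ζ (A : Module.End k V))
  refine ⟨s * T, fun g => ?_, ?_⟩
  · have hsT : s * T * ρu g * (s * T)⁻¹ = s * (T * ρu g * T⁻¹) * s⁻¹ := by group
    rw [hsT, hT, (hs _).eq, mul_inv_cancel_right]
  · have hsε : s ^ n * ε = 1 := Units.ext <| by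
      simp [s, hc, ← map_pow, ← map_mul, hζ, hc0]
    rw [(hs T).mul_pow, ← one_mul (ρu y), ← hsε, mul_assoc, inv_mul_cancel_right]

end FDRep

theorem stmt3 {G : Type} [Group G] [Finite G] (N : Subgroup G) [hN : N.Normal]
    (hquot : IsCyclic (G ⧸ N))
    (χ : N → ℂ) (hχ : IsIrrChar χ)
    (hinv : ∀ (g : G) (n : N), χ ⟨g * ↑n * g⁻¹, hN.conj_mem ↑n n.2 g⟩ = χ n) :
    ∃ χt : G → ℂ, IsIrrChar χt ∧ ∀ n : N, χt ↑n = χ n := by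
  obtain ⟨V, hV, hVχ⟩ := hχ
  have := Fintype.ofFinite N
  obtain ⟨q, hq⟩ := hquot.exists_generator
  obtain ⟨x, rfl⟩ := QuotientGroup.mk_surjective q
  set σ := MulAut.conjNormal (H := N) x
  obtain ⟨e⟩ := FDRep.nonempty_iso_of_character_eq (V := V)
    (W := (Action.res _ σ.toMonoidHom).obj V)
    (funext fun m => (hVχ _).trans ((hinv x m).trans (hVχ m).symm))
  obtain ⟨T, hT⟩ := V.exists_unit_conj_of_iso _ e
  set n := orderOf (x : G ⧸ N)
  have hxn : x ^ n ∈ N :=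
    (QuotientGroup.eq_one_iff _).mp (by rw [QuotientGroup.mk_pow, pow_orderOf_eq_one])
  obtain ⟨u, hu, hun⟩ := V.exists_unit_conj_and_pow_eq hT (orderOf_pos (x : G ⧸ N)).ne'
    (y := ⟨x ^ n, hxn⟩) (by ext m; simp [σ, n, ← map_pow])
  obtain ⟨ψ, hψ⟩ := V.ρ.toHomUnits.exists_comp_subtype_eq hq hu
    (V.ρ.toHomUnits.map_eq_zpow_of_pow_orderOf_eq hxn hun)
  let W := FDRep.of ((Units.coeHom _).comp ψ)
  have hWχ : ∀ m : N, W.character m = V.character m := fun m => by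
    change LinearMap.trace ℂ _ (ψ m : Module.End ℂ V) = _
    rw [show ψ m = V.ρ.toHomUnits m from DFunLike.congr_fun hψ m]
    rfl
  have : Simple ((Action.res _ N.subtype).obj W) := FDRep.simple_of_character_eq (funext hWχ)
  refine ⟨W.character, ⟨W, FDRep.simple_of_simple_res N.subtype W, fun _ => rfl⟩, fun m => ?_⟩
  exact (hWχ m).trans (hVχ m)
end

section
/- Let N be a normal subgroup of a finite group G and let χ̃₁, χ̃₂ be irreducible complex characters of G both of which restrict to the same irreducible character χ of N. Then there exists a unique linear character λ of G with N ≤ ker(λ) such that χ̃₂ = χ̃₁·λ (pointwise product). -/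
open Module

namespace Representation

variable {k G V W : Type*} [Field k] [Group G] [AddCommGroup V] [Module k V]
  [AddCommGroup W] [Module k W]

/-- The tensor product of `ρ` with the one-dimensional representation `μ`. -/
def twist (ρ : Representation k G V) (μ : G →* kˣ) : Representation k G V where
  toFun g := (μ g : k) • ρ g
  map_one' := by simp
  map_mul' g h := by rw [map_mul, map_mul, Units.val_mul, smul_mul_smul_comm]

@[simp]
lemma twist_apply (ρ : Representation k G V) (μ : G →* kˣ) (g : G) :
    ρ.twist μ g = (μ g : k) • ρ g := rfl

lemma character_twist [FiniteDimensional k V] (ρ : Representation k G V) (μ : G →* kˣ) (g : G) :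
    (ρ.twist μ).character g = μ g * ρ.character g := by
  simp [character]

def subrepresentationTwistOrderIso (ρ : Representation k G V) (μ : G →* kˣ) :
    Subrepresentation (ρ.twist μ) ≃o Subrepresentation ρ where
  toFun p := ⟨p.toSubmodule, fun g v hv => by
    simpa [(μ g).ne_zero] using
      p.toSubmodule.smul_mem ((μ g)⁻¹ : kˣ) (p.apply_mem_toSubmodule g hv)⟩
  invFun p := ⟨p.toSubmodule, fun g v hv =>
    p.toSubmodule.smul_mem _ (p.apply_mem_toSubmodule g hv)⟩
  left_inv _ := rfl
  right_inv _ := rfl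
  map_rel_iff' := Iff.rfl

instance isIrreducible_twist (ρ : Representation k G V) (μ : G →* kˣ) [IsIrreducible ρ] :
    IsIrreducible (ρ.twist μ) :=
  (subrepresentationTwistOrderIso ρ μ).isSimpleOrder

lemma isIntertwiningMap_twist_iff (ρ : Representation k G V) (σ : Representation k G W)
    (μ : G →* kˣ) (f : V →ₗ[k] W) :
    (ρ.twist μ).IsIntertwiningMap σ f ↔ ∀ g, linHom ρ σ g f = (μ g : k) • f := by
  rw [isIntertwiningMap_iff]
  refine forall_congr' fun g => ⟨fun h => LinearMap.ext fun v => ?_, fun h v => ?_⟩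
  · simpa [← Module.End.mul_apply, ← map_mul] using (h (ρ g⁻¹ v)).symm
  · simpa [← Module.End.mul_apply, ← map_mul] using (LinearMap.congr_fun h (ρ g v)).symm

lemma character_eq_of_ne_zero {ρ : Representation k G V} {σ : Representation k G W}
    [IsIrreducible ρ] [IsIrreducible σ] (f : IntertwiningMap ρ σ) (hf : f ≠ 0) :
    ρ.character = σ.character :=
  char_iso (f.ofBijective ((IsIrreducible.bijective_or_eq_zero f).resolve_right hf))

section FiniteGroup

variable [Fintype G] [CharZero k] {V' W' : Type*} [AddCommGroup V'] [Module k V']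
  [AddCommGroup W'] [Module k W'] [FiniteDimensional k V] [FiniteDimensional k W]
  [FiniteDimensional k V'] [FiniteDimensional k W']

lemma finrank_intertwiningMap_eq_of_character_eq {ρ : Representation k G V}
    {σ : Representation k G W} {ρ' : Representation k G V'} {σ' : Representation k G W'}
    (hρ : ρ.character = ρ'.character) (hσ : σ.character = σ'.character) :
    finrank k (IntertwiningMap ρ σ) = finrank k (IntertwiningMap ρ' σ') := by
  have : Invertible (Nat.card G : k) := invertibleOfNonzero (by simp)
  have h := card_inv_mul_sum_char_mul_char_eq_finrank ρ σ
  rw [hρ, hσ, card_inv_mul_sum_char_mul_char_eq_finrank] at h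
  exact_mod_cast h.symm

lemma exists_ne_zero_of_character_eq [IsAlgClosed k] {ρ : Representation k G V}
    {σ : Representation k G W} [IsIrreducible σ] (h : ρ.character = σ.character) :
    ∃ f : IntertwiningMap ρ σ, f ≠ 0 := by
  rw [← finrank_pos_iff_exists_ne_zero (R := k), finrank_intertwiningMap_eq_of_character_eq h rfl,
    IsIrreducible.finrank_intertwiningMap_self]
  exact one_pos

end FiniteGroup

lemma exists_apply_eq_smul_of_finrank_eq_one (ρ : Representation k G V) (h : finrank k V = 1) :
    ∃ μ : G →* kˣ, ∀ g v, ρ g v = (μ g : k) • v := by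
  obtain ⟨c, hc⟩ : ∃ c : G → k, ∀ g, ρ g = c g • LinearMap.id :=
    ⟨_, fun g => ((LinearEquiv.smul_id_of_finrank_eq_one h).apply_symm_apply (ρ g)).symm⟩
  have hinj : Function.Injective fun a : k => a • (LinearMap.id : V →ₗ[k] V) :=
    (LinearEquiv.smul_id_of_finrank_eq_one h).injective
  let μ : G →* k :=
    { toFun := c
      map_one' := hinj (by dsimp only; rw [← hc, map_one, one_smul]; rfl)
      map_mul' g g' := hinj (by
        dsimp only
        rw [← hc, map_mul, hc g, hc g', mul_smul]
        ext; simp [smul_comm (c g)]) }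
  exact ⟨μ.toHomUnits, fun g v => by simp [μ, hc g]⟩

/-- The `N`-invariants of `linHom ρ σ` are the `N`-intertwiners; when they form a line, the
conjugation action of `G` on them, which factors through `G ⧸ N`, is by a linear character. -/
lemma exists_linHom_apply_eq_smul_of_finrank_eq_one (N : Subgroup G) [N.Normal]
    (ρ : Representation k G V) (σ : Representation k G W)
    (h : finrank k (IntertwiningMap (ρ.comp N.subtype) (σ.comp N.subtype)) = 1) :
    ∃ μ : G →* kˣ, (∀ n ∈ N, μ n = 1) ∧
      ∀ f ∈ invariants ((linHom ρ σ).comp N.subtype), ∀ g, linHom ρ σ g f = (μ g : k) • f := by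
  have hL : finrank k (invariants ((linHom ρ σ).comp N.subtype)) = 1 :=
    (invariantsEquivIntertwiningMap (ρ.comp N.subtype) (σ.comp N.subtype)).finrank_eq.trans h
  obtain ⟨μ, hμ⟩ :=
    exists_apply_eq_smul_of_finrank_eq_one ((linHom ρ σ).quotientToInvariants N) hL
  exact ⟨μ.comp (QuotientGroup.mk' N), fun n hn => by simp [(QuotientGroup.eq_one_iff n).2 hn],
    fun f hf g => congr_arg Subtype.val (hμ g ⟨f, hf⟩)⟩

theorem existsUnique_character_eq_mul_of_finrank_eq_one [Fintype G] [CharZero k] [IsAlgClosed k]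
    [FiniteDimensional k V] [FiniteDimensional k W] (N : Subgroup G) [N.Normal]
    {ρ : Representation k G V} {σ : Representation k G W} [IsIrreducible ρ] [IsIrreducible σ]
    (h : finrank k (IntertwiningMap (ρ.comp N.subtype) (σ.comp N.subtype)) = 1) :
    ∃! μ : G →* kˣ, (∀ n ∈ N, μ n = 1) ∧ ∀ g, σ.character g = ρ.character g * μ g := by
  obtain ⟨μ, hμN, hμ⟩ := exists_linHom_apply_eq_smul_of_finrank_eq_one N ρ σ h
  refine ⟨μ, ⟨hμN, fun g => ?_⟩, fun ν ⟨hνN, hν⟩ => ?_⟩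
  · obtain ⟨F, hF⟩ := finrank_pos_iff_exists_ne_zero.mp (h ▸ one_pos)
    have hFμ := (isIntertwiningMap_twist_iff ρ σ μ F.toLinearMap).2
      (hμ _ ((invariantsEquivIntertwiningMap _ _).symm F).2)
    have hchar := character_eq_of_ne_zero (F.toLinearMap.intertwiningMap_of_isIntertwiningMap _ _
      hFμ.isIntertwining) fun h0 => hF (IntertwiningMap.ext congr(($h0).toLinearMap))
    rw [← hchar, character_twist, mul_comm]
  · obtain ⟨f, hf⟩ := exists_ne_zero_of_character_eq (ρ := ρ.twist ν) (σ := σ)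
      (funext fun g => by rw [character_twist, hν, mul_comm])
    have hfν := (isIntertwiningMap_twist_iff ρ σ ν f.toLinearMap).1 ⟨f.isIntertwining⟩
    have hmem : f.toLinearMap ∈ invariants ((linHom ρ σ).comp N.subtype) := fun n => by
      simp [hfν, hνN n n.2]
    ext g
    exact smul_left_injective k (fun h0 => hf (IntertwiningMap.ext h0))
      ((hfν g).symm.trans (hμ _ hmem g))

end Representation

namespace FDRep

open CategoryTheory

universe u

variable {k G : Type u} [Field k] [Group G]

def subrepresentationι (V : FDRep k G) (p : Subrepresentation V.ρ) :
    FDRep.of p.toRepresentation ⟶ V where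
  hom := ⟨ModuleCat.ofHom p.toSubmodule.subtype⟩
  comm _ := rfl

instance isIrreducible_ρ (V : FDRep k G) [Simple V] : Representation.IsIrreducible V.ρ where
  exists_pair_ne := by
    refine ⟨⊥, ⊤, fun h => id_nonzero V (ConcreteCategory.hom_ext _ _ fun v => ?_)⟩
    have hv : v ∈ (⊥ : Subrepresentation V.ρ) := h ▸ trivial
    rw [show v = 0 from hv]
    rfl
  eq_bot_or_eq_top p := by
    have : Mono (subrepresentationι V p) :=
      ConcreteCategory.mono_of_injective _ Subtype.val_injective
    by_cases hι : subrepresentationι V p = 0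
    · left
      refine Subrepresentation.toSubmodule_injective (eq_bot_iff.2 fun v hv => ?_)
      exact ConcreteCategory.congr_hom hι ⟨v, hv⟩
    · right
      have := isIso_of_mono_of_nonzero hι
      refine Subrepresentation.toSubmodule_injective (eq_top_iff.2 fun v _ => ?_)
      obtain ⟨x, rfl⟩ := (ConcreteCategory.bijective_of_isIso (subrepresentationι V p)).2 v
      exact x.2

lemma character_ρ (V : FDRep k G) : Representation.character V.ρ = V.character := rfl

end FDRep

theorem stmt5 {G : Type} [Group G] [Finite G] (N : Subgroup G) [hN : N.Normal]
    (χ : N → ℂ) (hχ : IsIrrChar χ)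
    (χt₁ χt₂ : G → ℂ) (h1 : IsIrrChar χt₁) (h2 : IsIrrChar χt₂)
    (hr1 : ∀ n : N, χt₁ ↑n = χ n) (hr2 : ∀ n : N, χt₂ ↑n = χ n) :
    ∃! lam : G →* ℂˣ, (∀ n ∈ N, lam n = 1) ∧ ∀ g : G, χt₂ g = χt₁ g * (lam g : ℂ) := by
  have := Fintype.ofFinite G
  have := Fintype.ofFinite N
  obtain ⟨W, _, hWχ⟩ := hχ
  obtain ⟨V₁, _, hV₁χ⟩ := h1
  obtain ⟨V₂, _, hV₂χ⟩ := h2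
  have hres₁ : Representation.character (V₁.ρ.comp N.subtype) = Representation.character W.ρ :=
    funext fun n => (hV₁χ n).trans ((hr1 n).trans (hWχ n).symm)
  have hres₂ : Representation.character (V₂.ρ.comp N.subtype) = Representation.character W.ρ :=
    funext fun n => (hV₂χ n).trans ((hr2 n).trans (hWχ n).symm)
  have hline : finrank ℂ (Representation.IntertwiningMap (V₁.ρ.comp N.subtype)
      (V₂.ρ.comp N.subtype)) = 1 := by
    rw [Representation.finrank_intertwiningMap_eq_of_character_eq hres₁ hres₂]
    exact Representation.IsIrreducible.finrank_intertwiningMap_self W.ρ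
  simpa only [← hV₁χ, ← hV₂χ, FDRep.character_ρ] using
    Representation.existsUnique_character_eq_mul_of_finrank_eq_one N hline
end

section
/- Let G be a finite group with normal subgroup N, let θ be a G-invariant irreducible character of N, and let 𝒫 : G → GLₙ(K) be a projective representation associated to the character triple (G,N,θ), where K is an algebraically closed field of characteristic 0. Then for every c ∈ C_G(N), the matrix 𝒫(c) is a scalar matrix. -/
/-! Schur's lemma for a representation `ρ` is proved by comparing characters: if `ρ` has the
character of some irreducible representation, orthonormality of characters gives
`dim Hom_G(ρ, ρ) = ⟨χ, χ⟩ = 1`, so every endomorphism commuting with `ρ` is a scalar.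
For `c ∈ C_G(N)` the axioms `𝒫(gn) = 𝒫(g)𝒫(n)`, `𝒫(ng) = 𝒫(n)𝒫(g)` say that `𝒫(c)` commutes with
the ordinary representation `𝒫|_N`, which affords the irreducible character `θ`. -/

/-- `χ` is the character of an irreducible (finite-dimensional)
`K`-representation of `G`. -/
def IsIrrCharOver (K : Type) [Field K] {G : Type} [Group G] (χ : G → K) : Prop :=
  ∃ V : FDRep K G, CategoryTheory.Simple V ∧ ∀ g : G, V.character g = χ g

open Module

namespace Representation

variable {k G V : Type*} [Field k] [AddCommGroup V] [Module k V]

theorem finrank_intertwiningMap_self_of_character_eq [CharZero k] [IsAlgClosed k] [Group G]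
    [Fintype G] [FiniteDimensional k V] (ρ : Representation k G V) (W : FDRep k G)
    [CategoryTheory.Simple W]
    (h : ρ.character = W.character) : finrank k (IntertwiningMap ρ ρ) = 1 := by
  have : Invertible (Nat.card G : k) := invertibleOfNonzero (Nat.cast_ne_zero.mpr Nat.card_pos.ne')
  have hW := FDRep.char_orthonormal W W
  rw [if_pos ⟨CategoryTheory.Iso.refl W⟩, ← h, card_inv_mul_sum_char_mul_char_eq_finrank] at hW
  exact_mod_cast hW

theorem IntertwiningMap.exists_eq_smul_id_of_finrank_eq_one [Monoid G] {ρ : Representation k G V}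
    (h : finrank k (IntertwiningMap ρ ρ) = 1) (f : IntertwiningMap ρ ρ) :
    ∃ c : k, f = c • IntertwiningMap.id ρ := by
  have hid : IntertwiningMap.id ρ ≠ 0 := by
    intro h0
    have : Subsingleton (IntertwiningMap ρ ρ) := ⟨fun f g => IntertwiningMap.ext <| by
      ext v
      rw [← IntertwiningMap.id_apply ρ v, h0]
      simp⟩
    simp [finrank_zero_of_subsingleton] at h
  obtain ⟨c, hc⟩ := (finrank_eq_one_iff_of_nonzero' _ hid).mp h f
  exact ⟨c, hc.symm⟩

end Representation

section MatrixRepresentation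

variable {K H : Type} {ι : Type*} [Field K] [Group H] [Fintype ι] [DecidableEq ι]

abbrev MonoidHom.toRepresentation (ρ : H →* Matrix ι ι K) : Representation K H (ι → K) :=
  (Matrix.toLinAlgEquiv' : Matrix ι ι K ≃ₐ[K] _).toMonoidHom.comp ρ

theorem MonoidHom.character_toRepresentation (ρ : H →* Matrix ι ι K) (h : H) :
    ρ.toRepresentation.character h = (ρ h).trace :=
  Matrix.trace_toLin'_eq (ρ h)

theorem MonoidHom.exists_eq_smul_one_of_forall_commute [CharZero K] [IsAlgClosed K] [Finite H]
    (ρ : H →* Matrix ι ι K) (hρ : IsIrrCharOver K fun h => (ρ h).trace) (A : Matrix ι ι K)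
    (hA : ∀ h, ρ h * A = A * ρ h) : ∃ k : K, A = k • 1 := by
  have := Fintype.ofFinite H
  obtain ⟨W, hW, hWchar⟩ := hρ
  have hdim := ρ.toRepresentation.finrank_intertwiningMap_self_of_character_eq W
    (funext fun h => (ρ.character_toRepresentation h).trans (hWchar h).symm)
  let f : ρ.toRepresentation.IntertwiningMap ρ.toRepresentation :=
    ⟨Matrix.toLin' A, fun h => by
      change Matrix.toLin' A ∘ₗ Matrix.toLin' (ρ h) = Matrix.toLin' (ρ h) ∘ₗ Matrix.toLin' A
      rw [← Matrix.toLin'_mul, ← Matrix.toLin'_mul, hA h]⟩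
  obtain ⟨k, hk⟩ := Representation.IntertwiningMap.exists_eq_smul_id_of_finrank_eq_one hdim f
  refine ⟨k, Matrix.toLin'.injective ?_⟩
  simpa [f] using congrArg Representation.IntertwiningMap.toLinearMap hk

end MatrixRepresentation

theorem stmt7_general {K : Type} [Field K] [IsAlgClosed K] [CharZero K]
    {G : Type} [Group G] [Finite G] (N : Subgroup G)
    (θ : N → K) (hθirr : IsIrrCharOver K θ)
    (n : ℕ) (P : G → Matrix.GeneralLinearGroup (Fin n) K)
    -- the restriction of `P` to `N` is an ordinary representation:
    (hNmul : ∀ m m' : N, (↑(P (↑m * ↑m')) : Matrix (Fin n) (Fin n) K) =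
      (↑(P ↑m) : Matrix (Fin n) (Fin n) K) * (↑(P ↑m') : Matrix (Fin n) (Fin n) K))
    -- affording the character `θ`:
    (htrace : ∀ m : N, Matrix.trace (↑(P ↑m) : Matrix (Fin n) (Fin n) K) = θ m)
    -- and `P(gn) = P(g)P(n)`, `P(ng) = P(n)P(g)` for `g ∈ G`, `n ∈ N`:
    (hleft : ∀ (g : G) (m : N), (↑(P (g * ↑m)) : Matrix (Fin n) (Fin n) K) =
      (↑(P g) : Matrix (Fin n) (Fin n) K) * (↑(P ↑m) : Matrix (Fin n) (Fin n) K))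
    (hright : ∀ (g : G) (m : N), (↑(P (↑m * g)) : Matrix (Fin n) (Fin n) K) =
      (↑(P ↑m) : Matrix (Fin n) (Fin n) K) * (↑(P g) : Matrix (Fin n) (Fin n) K)) :
    ∀ c ∈ Subgroup.centralizer (N : Set G), ∃ k : K,
      (↑(P c) : Matrix (Fin n) (Fin n) K) = k • (1 : Matrix (Fin n) (Fin n) K) := by
  intro c hc
  let ρ : N →* Matrix (Fin n) (Fin n) K := (Units.coeHom _).comp <|
    MonoidHom.mk' (fun m => P m) fun m m' => Units.ext (hNmul m m')
  have hρ : IsIrrCharOver K fun m => (ρ m).trace := by simpa [ρ, htrace] using hθirr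
  refine ρ.exists_eq_smul_one_of_forall_commute hρ _ fun m => ?_
  calc ρ m * P c = P (m * c) := (hright c m).symm
    _ = P (c * m) := by rw [Subgroup.mem_centralizer_iff.mp hc m m.2]
    _ = P c * ρ m := hleft c m

theorem stmt7 {K : Type} [Field K] [IsAlgClosed K] [CharZero K]
    {G : Type} [Group G] [Finite G] (N : Subgroup G) [hN : N.Normal]
    (θ : N → K) (hθirr : IsIrrCharOver K θ)
    (hθinv : ∀ (g : G) (m : N), θ ⟨g * ↑m * g⁻¹, hN.conj_mem ↑m m.2 g⟩ = θ m)
    (n : ℕ) (P : G → Matrix.GeneralLinearGroup (Fin n) K)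
    -- `P` is a projective representation:
    (hproj : ∀ g g' : G, ∃ α : Kˣ,
      (↑(P (g * g')) : Matrix (Fin n) (Fin n) K) =
        (α : K) • ((↑(P g) : Matrix (Fin n) (Fin n) K) * (↑(P g') : Matrix (Fin n) (Fin n) K)))
    -- the restriction of `P` to `N` is an ordinary representation:
    (hNmul : ∀ m m' : N, (↑(P (↑m * ↑m')) : Matrix (Fin n) (Fin n) K) =
      (↑(P ↑m) : Matrix (Fin n) (Fin n) K) * (↑(P ↑m') : Matrix (Fin n) (Fin n) K))
    -- affording the character `θ`:
    (htrace : ∀ m : N, Matrix.trace (↑(P ↑m) : Matrix (Fin n) (Fin n) K) = θ m)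
    -- and `P(gn) = P(g)P(n)`, `P(ng) = P(n)P(g)` for `g ∈ G`, `n ∈ N`:
    (hleft : ∀ (g : G) (m : N), (↑(P (g * ↑m)) : Matrix (Fin n) (Fin n) K) =
      (↑(P g) : Matrix (Fin n) (Fin n) K) * (↑(P ↑m) : Matrix (Fin n) (Fin n) K))
    (hright : ∀ (g : G) (m : N), (↑(P (↑m * g)) : Matrix (Fin n) (Fin n) K) =
      (↑(P ↑m) : Matrix (Fin n) (Fin n) K) * (↑(P g) : Matrix (Fin n) (Fin n) K)) :
    ∀ c ∈ Subgroup.centralizer (N : Set G), ∃ k : K,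
      (↑(P c) : Matrix (Fin n) (Fin n) K) = k • (1 : Matrix (Fin n) (Fin n) K) :=
  stmt7_general N θ hθirr n P hNmul htrace hleft hright
end

section
/- Let A be a finite perfect group with trivial center and B a finite solvable group. Then Aut(A × B) is isomorphic to Aut(A) × Aut(B), via the map sending (α,β) to the automorphism acting as α on A × {1} and β on {1} × B. -/
/-!
A homomorphism from a perfect group to a solvable group is trivial, so every automorphism of
`A × B` maps `A × 1` into itself, and, applied to its inverse as well, onto itself. Then the image
of `1 × B` commutes with `A × 1`; as `Z(A) = 1` it lies in `1 × B`. An automorphism preserving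
both factors is the product of its restrictions to them.
-/

open MonoidHom

theorem MonoidHom.eq_one_of_isPerfect_of_isSolvable {G H : Type*} [Group G] [Group H]
    [Group.IsPerfect G] [hH : Group.IsSolvable H] (f : G →* H) : f = 1 := by
  obtain ⟨n, hn⟩ := hH
  have h := map_derivedSeries_le_derivedSeries f n
  rwa [Group.IsPerfect.derivedSeries_eq_top, hn, ← range_eq_map, le_bot_iff,
    range_eq_bot_iff] at h

theorem MonoidHom.eq_prodMap_of_apply_inl_of_apply_inr {A B C D : Type*} [Group A] [Group B]
    [Group C] [Group D] (g : A × B →* C × D) (hA : ∀ a, (g (a, 1)).2 = 1)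
    (hB : ∀ b, (g (1, b)).1 = 1) :
    g = ((fst C D).comp (g.comp (inl A B))).prodMap ((snd C D).comp (g.comp (inr A B))) := by
  ext x
  · simpa [hB] using congrArg Prod.fst (map_mul g (x.1, 1) (1, x.2))
  · simpa [hA] using congrArg Prod.snd (map_mul g (x.1, 1) (1, x.2))

theorem MulEquiv.exists_prodCongr_eq {A B C D : Type*} [Group A] [Group B] [Group C] [Group D]
    (f : A × B ≃* C × D) (hA : ∀ a, (f (a, 1)).2 = 1) (hB : ∀ b, (f (1, b)).1 = 1) :
    ∃ (α : A ≃* C) (β : B ≃* D), α.prodCongr β = f := by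
  set α := (fst C D).comp (f.toMonoidHom.comp (inl A B))
  set β := (snd C D).comp (f.toMonoidHom.comp (inr A B))
  have hf : f.toMonoidHom = α.prodMap β :=
    f.toMonoidHom.eq_prodMap_of_apply_inl_of_apply_inr hA hB
  have hbij : Function.Bijective (Prod.map α β) := by
    rw [← coe_prodMap, ← hf]
    exact f.bijective
  obtain ⟨hα, hβ⟩ := Prod.map_bijective.mp hbij
  exact ⟨.ofBijective α hα, .ofBijective β hβ,
    MulEquiv.ext fun x => (DFunLike.congr_fun hf x).symm⟩

namespace MulAut

variable {A B : Type*} [Group A] [Group B]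

variable (A B) in
def prodCongrHom : MulAut A × MulAut B →* MulAut (A × B) where
  toFun p := p.1.prodCongr p.2
  map_one' := rfl
  map_mul' _ _ := rfl

theorem prodCongrHom_injective : Function.Injective (prodCongrHom A B) := by
  intro p q h
  ext a
  · exact congrArg Prod.fst (DFunLike.congr_fun h (a, 1))
  · exact congrArg Prod.snd (DFunLike.congr_fun h (1, a))

variable [Group.IsPerfect A] [Group.IsSolvable B]

theorem snd_apply_inl_eq_one (f : MulAut (A × B)) (a : A) : (f (a, 1)).2 = 1 :=
  DFunLike.congr_fun
    ((snd A B).comp (f.toMonoidHom.comp (inl A B))).eq_one_of_isPerfect_of_isSolvable a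

theorem apply_fst_symm_apply_inl (f : MulAut (A × B)) (a : A) :
    f ((f.symm (a, 1)).1, 1) = (a, 1) := by
  have h : ((f.symm (a, 1)).1, (1 : B)) = f.symm (a, 1) :=
    Prod.ext rfl (snd_apply_inl_eq_one f.symm a).symm
  rw [h, MulEquiv.apply_symm_apply]

theorem fst_apply_inr_eq_one (hZ : Subgroup.center A = ⊥) (f : MulAut (A × B)) (b : B) :
    (f (1, b)).1 = 1 := by
  rw [← Subgroup.mem_bot, ← hZ, Subgroup.mem_center_iff]
  intro a
  have h : f (1, b) * (a, 1) = (a, 1) * f (1, b) := by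
    rw [← apply_fst_symm_apply_inl f a, ← map_mul, ← map_mul]
    congr 1
    ext <;> simp
  exact (congrArg Prod.fst h).symm

end MulAut

theorem stmt10_general {A B : Type*} [Group A] [Group B]
    (hA : commutator A = ⊤) (hZ : Subgroup.center A = ⊥) (hB : IsSolvable B) :
    ∃ e : (MulAut A × MulAut B) ≃* MulAut (A × B),
      ∀ p : MulAut A × MulAut B, e p = MulEquiv.prodCongr p.1 p.2 := by
  have : Group.IsPerfect A := ⟨hA⟩
  have : Group.IsSolvable B := hB
  refine ⟨.ofBijective (MulAut.prodCongrHom A B)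
    ⟨MulAut.prodCongrHom_injective, fun f => ?_⟩, fun _ => rfl⟩
  obtain ⟨α, β, h⟩ := f.exists_prodCongr_eq (MulAut.snd_apply_inl_eq_one f)
    (MulAut.fst_apply_inr_eq_one hZ f)
  exact ⟨(α, β), h⟩

theorem stmt10 {A B : Type*} [Group A] [Group B] [Finite A] [Finite B]
    (hA : commutator A = ⊤) (hZ : Subgroup.center A = ⊥) (hB : IsSolvable B) :
    ∃ e : (MulAut A × MulAut B) ≃* MulAut (A × B),
      ∀ p : MulAut A × MulAut B, e p = MulEquiv.prodCongr p.1 p.2 :=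
  stmt10_general hA hZ hB
end
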